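/- Let α > 0 and for an integer N ≥ 1 and t > 0 define σ_N(t) := (1/(8π²)) ∑_{n ∈ ℤ², |n| ≤ N} ( t / ⟨n⟩^{2(1−α)} − sin(2t⟨n⟩) / (2⟨n⟩^{3−2α}) ). Then there exist constants c, C, K > 0, depending only on α, such that for every t > 0: (i) 0 ≤ σ_N(t) ≤ C t N^{2α} for every integer N ≥ 1, and (ii) σ_N(t) ≥ c t N^{2α} for every integer N ≥ K/t. In particular σ_N(t) ∼ t N^{2α} as N → ∞. (This is the asymptotic behaviour of the time-dependent renormalization constant for the wave equation, equation (sigma1) of the paper.) -/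

import Mathlib

/-!
With `x = ⟨n⟩` the summand is `x ^ (2α - 2) * (t - sin (2tx) / (2x))`, and `|sin (2tx) / (2x)| ≤ t`,
so it lies between `0` and `2t x ^ (2α - 2)`, and it is at least `t/2 * x ^ (2α - 2)` once `tx ≥ 1`.

The upper bound then reduces to `∑_{|n₁|, |n₂| ≤ N} ⟨n⟩ ^ (2α - 2) ≲ N ^ (2α)`. For `α ≥ 1`
every term is `≲ N ^ (2α - 2)`. For `α ≤ 1`, `⟨n⟩² ≥ ⟨n₁⟩⟨n₂⟩` factors the sum into two
one-dimensional sums `∑_{|a| ≤ N} ⟨a⟩ ^ (α - 1) ≲ N ^ α`, which telescope by Bernoulli's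
inequality `α m ^ (α - 1) ≤ m ^ α - (m - 1) ^ α`.

For the lower bound, the `≍ N²` lattice points of `[M, 2M] × [0, M]`, `M = ⌊N/3⌋`, lie in the disc
`|n| ≤ N` and satisfy `N/5 ≤ ⟨n⟩ ≤ 2N`; when `tN ≥ 5` each of them contributes `≳ t N ^ (2α - 2)`.
-/

/-- Japanese bracket `⟨n⟩ = (1 + |n|²)^{1/2}` for `n ∈ ℤ²`. -/
noncomputable def jb2 (n : ℤ × ℤ) : ℝ :=
  Real.sqrt (1 + (n.1 : ℝ) ^ 2 + (n.2 : ℝ) ^ 2)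

/-- Euclidean norm `|n|` for `n ∈ ℤ²`. -/
noncomputable def znorm2 (n : ℤ × ℤ) : ℝ :=
  Real.sqrt ((n.1 : ℝ) ^ 2 + (n.2 : ℝ) ^ 2)

/-- The time-dependent renormalization constant `σ_N(t)` for the wave equation. -/
noncomputable def sigmaRen (α : ℝ) (N : ℕ) (t : ℝ) : ℝ :=
  (1 / (8 * Real.pi ^ 2)) * ∑' n : ℤ × ℤ,
    Set.indicator {m : ℤ × ℤ | znorm2 m ≤ N}
      (fun m => t / jb2 m ^ (2 * (1 - α))
        - Real.sin (2 * t * jb2 m) / (2 * jb2 m ^ (3 - 2 * α))) n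

open Finset Real

lemma sum_range_succ_rpow_le {β : ℝ} (hβ₀ : 0 < β) (hβ₁ : β ≤ 1) (N : ℕ) :
    ∑ m ∈ range N, ((m : ℝ) + 1) ^ (β - 1) ≤ (N : ℝ) ^ β / β := by
  have hstep : ∀ x : ℝ, 1 ≤ x → β * x ^ (β - 1) ≤ x ^ β - (x - 1) ^ β := by
    intro x hx
    have hx₀ : 0 < x := by linarith
    have bernoulli := rpow_one_add_le_one_add_mul_self (s := -x⁻¹)
      (by rw [neg_le_neg_iff]; exact inv_le_one_of_one_le₀ hx) hβ₀.le hβ₁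
    have h : (x - 1) ^ β = x ^ β * (1 + -x⁻¹) ^ β := by
      rw [← mul_rpow hx₀.le (by field_simp; linarith)]; field_simp; ring_nf
    have h' : x ^ β * x⁻¹ = x ^ (β - 1) := by
      rw [rpow_sub_one hx₀.ne', div_eq_mul_inv]
    nlinarith [rpow_pos_of_pos hx₀ β]
  rw [le_div_iff₀ hβ₀, sum_mul]
  calc ∑ m ∈ range N, ((m : ℝ) + 1) ^ (β - 1) * β
      ≤ ∑ m ∈ range N, (((m + 1 : ℕ) : ℝ) ^ β - ((m : ℕ) : ℝ) ^ β) := by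
        gcongr with m
        have := hstep (m + 1) (by simp)
        push_cast
        simpa [mul_comm] using this
    _ = (N : ℝ) ^ β := by
        rw [sum_range_sub (fun m : ℕ => (m : ℝ) ^ β)]
        simp [zero_rpow hβ₀.ne']

lemma sum_Icc_natAbs_le (g : ℕ → ℝ) (hg : ∀ m, 0 ≤ g m) (N : ℕ) :
    ∑ a ∈ Icc (-(N : ℤ)) N, g a.natAbs ≤ 2 * ∑ m ∈ range (N + 1), g m := by
  set A := (range (N + 1)).image (fun m : ℕ => (m : ℤ))
  set B := (range (N + 1)).image (fun m : ℕ => -(m : ℤ))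
  have hcover : Icc (-(N : ℤ)) N ⊆ A ∪ B := by
    intro a ha
    rw [mem_Icc] at ha
    simp only [A, B, mem_union, mem_image, mem_range]
    rcases le_total 0 a with h | h
    · exact Or.inl ⟨a.toNat, by omega, by omega⟩
    · exact Or.inr ⟨(-a).toNat, by omega, by omega⟩
  calc ∑ a ∈ Icc (-(N : ℤ)) N, g a.natAbs
      ≤ ∑ a ∈ A ∪ B, g a.natAbs :=
        sum_le_sum_of_subset_of_nonneg hcover fun _ _ _ => hg _
    _ ≤ ∑ a ∈ A, g a.natAbs + ∑ a ∈ B, g a.natAbs := by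
        rw [← sum_union_inter]
        exact le_add_of_nonneg_right (sum_nonneg fun _ _ => hg _)
    _ ≤ ∑ m ∈ range (N + 1), g m + ∑ m ∈ range (N + 1), g m := by
        gcongr
        · exact (sum_image_le_of_nonneg fun _ _ => hg _).trans_eq (by simp)
        · exact (sum_image_le_of_nonneg fun _ _ => hg _).trans_eq (by simp)
    _ = 2 * ∑ m ∈ range (N + 1), g m := by ring

lemma sum_Icc_one_add_sq_rpow_le {β : ℝ} (hβ₀ : 0 < β) (hβ₁ : β ≤ 1) (N : ℕ) :
    ∑ a ∈ Icc (-(N : ℤ)) N, (1 + (a : ℝ) ^ 2) ^ ((β - 1) / 2) ≤ 2 * (1 + (N : ℝ) ^ β / β) := by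
  have hshift : ∀ m : ℕ, (1 + ((m + 1 : ℕ) : ℝ) ^ 2) ^ ((β - 1) / 2) ≤ ((m : ℝ) + 1) ^ (β - 1) := by
    intro m
    calc (1 + ((m + 1 : ℕ) : ℝ) ^ 2) ^ ((β - 1) / 2)
        ≤ (((m : ℝ) + 1) ^ 2) ^ ((β - 1) / 2) :=
          rpow_le_rpow_of_nonpos (by positivity) (by push_cast; linarith) (by linarith)
      _ = ((m : ℝ) + 1) ^ (β - 1) := by
          rw [← rpow_natCast, ← rpow_mul (by positivity)]; ring_nf
  calc ∑ a ∈ Icc (-(N : ℤ)) N, (1 + (a : ℝ) ^ 2) ^ ((β - 1) / 2)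
      = ∑ a ∈ Icc (-(N : ℤ)) N, (1 + ((a.natAbs : ℕ) : ℝ) ^ 2) ^ ((β - 1) / 2) := by
        simp only [Nat.cast_natAbs, Int.cast_abs, sq_abs]
    _ ≤ 2 * ∑ m ∈ range (N + 1), (1 + (m : ℝ) ^ 2) ^ ((β - 1) / 2) :=
        sum_Icc_natAbs_le (fun m => (1 + (m : ℝ) ^ 2) ^ ((β - 1) / 2)) (fun _ => by positivity) N
    _ ≤ 2 * (1 + (N : ℝ) ^ β / β) := by
        rw [sum_range_succ', Nat.cast_zero, zero_pow two_ne_zero, add_zero, one_rpow, add_comm]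
        gcongr
        exact (sum_le_sum fun m _ => hshift m).trans (sum_range_succ_rpow_le hβ₀ hβ₁ N)

lemma one_add_add_rpow_le {u v p : ℝ} (hu : 0 ≤ u) (hv : 0 ≤ v) (hp : p ≤ 0) :
    (1 + u + v) ^ p ≤ (1 + u) ^ (p / 2) * (1 + v) ^ (p / 2) := by
  rw [← mul_rpow (by positivity) (by positivity)]
  calc (1 + u + v) ^ p = ((1 + u + v) ^ 2) ^ (p / 2) := by
        rw [← rpow_natCast, ← rpow_mul (by positivity)]; ring_nf
    _ ≤ ((1 + u) * (1 + v)) ^ (p / 2) :=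
        rpow_le_rpow_of_nonpos (by positivity) (by nlinarith [mul_nonneg hu hv]) (by linarith)

lemma sq_mul_rpow_two_mul_sub_two {y : ℝ} (hy : 0 < y) (α : ℝ) :
    y ^ 2 * y ^ (2 * α - 2) = y ^ (2 * α) := by
  rw [← rpow_natCast, ← rpow_add hy]
  norm_num

lemma min_rpow_mul_rpow_le_rpow {a b x y p : ℝ} (ha : 0 < a) (hy : 0 < y) (hax : a * y ≤ x)
    (hxb : x ≤ b * y) : min (a ^ p) (b ^ p) * y ^ p ≤ x ^ p := by
  rcases le_total 0 p with hp | hp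
  · calc min (a ^ p) (b ^ p) * y ^ p ≤ a ^ p * y ^ p := by gcongr; exact min_le_left _ _
      _ = (a * y) ^ p := (mul_rpow ha.le hy.le).symm
      _ ≤ x ^ p := rpow_le_rpow (by positivity) hax hp
  · have hx : 0 < x := (mul_pos ha hy).trans_le hax
    have hb : 0 < b := pos_of_mul_pos_left (hx.trans_le hxb) hy.le
    calc min (a ^ p) (b ^ p) * y ^ p ≤ b ^ p * y ^ p := by gcongr; exact min_le_right _ _
      _ = (b * y) ^ p := (mul_rpow hb.le hy.le).symm
      _ ≤ x ^ p := rpow_le_rpow_of_nonpos hx hxb hp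

noncomputable def waveSummand (α t x : ℝ) : ℝ :=
  t / x ^ (2 * (1 - α)) - sin (2 * t * x) / (2 * x ^ (3 - 2 * α))

section waveSummand

variable {α t x : ℝ}

lemma waveSummand_eq (hx : 0 < x) :
    waveSummand α t x = x ^ (2 * α - 2) * (t - sin (2 * t * x) / (2 * x)) := by
  have h₁ : x ^ (2 * (1 - α)) = (x ^ (2 * α - 2))⁻¹ := by
    rw [← rpow_neg hx.le]; ring_nf
  have h₂ : x ^ (3 - 2 * α) = x * (x ^ (2 * α - 2))⁻¹ := by
    rw [show 3 - 2 * α = 1 + -(2 * α - 2) by ring, rpow_add hx, rpow_one, rpow_neg hx.le]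
  rw [waveSummand, h₁, h₂]
  field_simp

lemma abs_sin_two_mul_div_le (ht : 0 ≤ t) (hx : 0 < x) :
    |sin (2 * t * x) / (2 * x)| ≤ t := by
  rw [abs_div, abs_of_pos (by positivity : 0 < 2 * x), div_le_iff₀ (by positivity)]
  calc |sin (2 * t * x)| ≤ |2 * t * x| := abs_sin_le_abs
    _ = t * (2 * x) := by rw [abs_of_nonneg (by positivity)]; ring

lemma waveSummand_nonneg (ht : 0 ≤ t) (hx : 0 < x) : 0 ≤ waveSummand α t x := by
  rw [waveSummand_eq hx]
  have := (abs_le.1 (abs_sin_two_mul_div_le ht hx)).2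
  exact mul_nonneg (by positivity) (by linarith)

lemma waveSummand_le (ht : 0 ≤ t) (hx : 0 < x) :
    waveSummand α t x ≤ 2 * t * x ^ (2 * α - 2) := by
  rw [waveSummand_eq hx]
  have := (abs_le.1 (abs_sin_two_mul_div_le ht hx)).1
  nlinarith [rpow_pos_of_pos hx (2 * α - 2)]

lemma half_mul_le_waveSummand (hx : 0 < x) (htx : 1 ≤ t * x) :
    t / 2 * x ^ (2 * α - 2) ≤ waveSummand α t x := by
  rw [waveSummand_eq hx]
  have : sin (2 * t * x) / (2 * x) ≤ t / 2 := by
    rw [div_le_div_iff₀ (by positivity) two_pos]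
    nlinarith [sin_le_one (2 * t * x)]
  nlinarith [rpow_pos_of_pos hx (2 * α - 2)]

end waveSummand

lemma jb2_pos (n : ℤ × ℤ) : 0 < jb2 n := sqrt_pos.2 (by positivity)

lemma jb2_rpow_two_mul (n : ℤ × ℤ) (p : ℝ) :
    jb2 n ^ (2 * p) = (1 + (n.1 : ℝ) ^ 2 + (n.2 : ℝ) ^ 2) ^ p := by
  rw [jb2, sqrt_eq_rpow, ← rpow_mul (by positivity)]
  ring_nf

noncomputable def latticeSquare (N : ℕ) : Finset (ℤ × ℤ) := Icc (-(N : ℤ)) N ×ˢ Icc (-(N : ℤ)) N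

lemma card_latticeSquare (N : ℕ) : #(latticeSquare N) = (2 * N + 1) ^ 2 := by
  rw [latticeSquare, card_product, Int.card_Icc, sq]
  congr <;> omega

lemma mem_latticeSquare_of_znorm2_le {N : ℕ} {n : ℤ × ℤ} (h : znorm2 n ≤ N) :
    n ∈ latticeSquare N := by
  have coord_le : ∀ a b : ℤ, √((a : ℝ) ^ 2 + (b : ℝ) ^ 2) ≤ N → -(N : ℤ) ≤ a ∧ a ≤ N := by
    intro a b hab
    have : |(a : ℝ)| ≤ N :=
      (abs_le_sqrt (le_add_of_nonneg_right (sq_nonneg _))).trans hab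
    rw [abs_le] at this
    exact ⟨by exact_mod_cast this.1, by exact_mod_cast this.2⟩
  rw [latticeSquare, mem_product, mem_Icc, mem_Icc]
  refine ⟨coord_le n.1 n.2 h, coord_le n.2 n.1 ?_⟩
  rwa [add_comm]

noncomputable def latticeDisc (N : ℕ) : Finset (ℤ × ℤ) :=
  {n ∈ latticeSquare N | znorm2 n ≤ N}

lemma sigmaRen_eq_sum (α : ℝ) (N : ℕ) (t : ℝ) :
    sigmaRen α N t = 1 / (8 * π ^ 2) * ∑ n ∈ latticeDisc N, waveSummand α t (jb2 n) := by
  rw [sigmaRen, latticeDisc, sum_filter, tsum_eq_sum (s := latticeSquare N)]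
  · rfl
  · intro n hn
    rw [Set.indicator_of_notMem]
    exact fun h => hn (mem_latticeSquare_of_znorm2_le h)

lemma sum_latticeSquare_jb2_rpow_le_of_le_one {α : ℝ} (hα₀ : 0 < α) (hα₁ : α ≤ 1) {N : ℕ}
    (hN : 1 ≤ N) :
    ∑ n ∈ latticeSquare N, jb2 n ^ (2 * α - 2) ≤ (2 * (1 + 1 / α)) ^ 2 * (N : ℝ) ^ (2 * α) := by
  set f : ℤ → ℝ := fun a => (1 + (a : ℝ) ^ 2) ^ ((α - 1) / 2)
  have hf : ∑ a ∈ Icc (-(N : ℤ)) N, f a ≤ 2 * (1 + 1 / α) * (N : ℝ) ^ α := by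
    have h1 : (1 : ℝ) ≤ (N : ℝ) ^ α := one_le_rpow (by exact_mod_cast hN) hα₀.le
    have := sum_Icc_one_add_sq_rpow_le hα₀ hα₁ N
    have h2 : (N : ℝ) ^ α / α = 1 / α * (N : ℝ) ^ α := by ring
    nlinarith [one_div_pos.2 hα₀]
  calc ∑ n ∈ latticeSquare N, jb2 n ^ (2 * α - 2)
      ≤ ∑ n ∈ latticeSquare N, f n.1 * f n.2 := by
        gcongr with n
        rw [show 2 * α - 2 = 2 * (α - 1) by ring, jb2_rpow_two_mul]
        exact one_add_add_rpow_le (sq_nonneg _) (sq_nonneg _) (by linarith)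
    _ = (∑ a ∈ Icc (-(N : ℤ)) N, f a) ^ 2 := by
        rw [latticeSquare, sum_product, sq, sum_mul_sum]
    _ ≤ (2 * (1 + 1 / α) * (N : ℝ) ^ α) ^ 2 := by gcongr
    _ = (2 * (1 + 1 / α)) ^ 2 * (N : ℝ) ^ (2 * α) := by
        rw [mul_pow, ← rpow_mul_natCast (Nat.cast_nonneg N)]; ring_nf

lemma sum_latticeSquare_jb2_rpow_le_of_one_le {α : ℝ} (hα : 1 ≤ α) {N : ℕ} (hN : 1 ≤ N) :
    ∑ n ∈ latticeSquare N, jb2 n ^ (2 * α - 2) ≤ 9 * 3 ^ (α - 1) * (N : ℝ) ^ (2 * α) := by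
  have hN₀ : (0 : ℝ) < N := by exact_mod_cast hN
  have hterm : ∀ n ∈ latticeSquare N,
      jb2 n ^ (2 * α - 2) ≤ 3 ^ (α - 1) * (N : ℝ) ^ (2 * α - 2) := by
    intro n hn
    rw [latticeSquare, mem_product, mem_Icc, mem_Icc] at hn
    have h₁ : (n.1 : ℝ) ^ 2 ≤ (N : ℝ) ^ 2 :=
      sq_le_sq' (by exact_mod_cast hn.1.1) (by exact_mod_cast hn.1.2)
    have h₂ : (n.2 : ℝ) ^ 2 ≤ (N : ℝ) ^ 2 :=
      sq_le_sq' (by exact_mod_cast hn.2.1) (by exact_mod_cast hn.2.2)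
    have h₃ : (1 : ℝ) ≤ (N : ℝ) ^ 2 := one_le_pow₀ (by exact_mod_cast hN)
    calc jb2 n ^ (2 * α - 2) = (1 + (n.1 : ℝ) ^ 2 + (n.2 : ℝ) ^ 2) ^ (α - 1) := by
          rw [show 2 * α - 2 = 2 * (α - 1) by ring, jb2_rpow_two_mul]
      _ ≤ (3 * (N : ℝ) ^ 2) ^ (α - 1) := rpow_le_rpow (by positivity) (by linarith) (by linarith)
      _ = 3 ^ (α - 1) * (N : ℝ) ^ (2 * α - 2) := by
          rw [mul_rpow (by norm_num) (by positivity), ← rpow_natCast, ← rpow_mul hN₀.le]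
          ring_nf
  calc ∑ n ∈ latticeSquare N, jb2 n ^ (2 * α - 2)
      ≤ #(latticeSquare N) • (3 ^ (α - 1) * (N : ℝ) ^ (2 * α - 2)) := sum_le_card_nsmul _ _ _ hterm
    _ ≤ 9 * (N : ℝ) ^ 2 * (3 ^ (α - 1) * (N : ℝ) ^ (2 * α - 2)) := by
        rw [card_latticeSquare, nsmul_eq_mul]
        gcongr
        have : (1 : ℝ) ≤ N := by exact_mod_cast hN
        push_cast; nlinarith
    _ = 9 * 3 ^ (α - 1) * (N : ℝ) ^ (2 * α) := by
        rw [← sq_mul_rpow_two_mul_sub_two hN₀ α]; ring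

lemma exists_sum_latticeSquare_jb2_rpow_le {α : ℝ} (hα : 0 < α) :
    ∃ C > 0, ∀ N : ℕ, 1 ≤ N →
      ∑ n ∈ latticeSquare N, jb2 n ^ (2 * α - 2) ≤ C * (N : ℝ) ^ (2 * α) := by
  rcases le_total α 1 with h | h
  · exact ⟨_, by positivity, fun N hN => sum_latticeSquare_jb2_rpow_le_of_le_one hα h hN⟩
  · exact ⟨_, by positivity, fun N hN => sum_latticeSquare_jb2_rpow_le_of_one_le h hN⟩

lemma sum_latticeDisc_waveSummand_le (α : ℝ) {t : ℝ} (ht : 0 ≤ t) (N : ℕ) :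
    ∑ n ∈ latticeDisc N, waveSummand α t (jb2 n)
      ≤ 2 * t * ∑ n ∈ latticeSquare N, jb2 n ^ (2 * α - 2) := by
  rw [mul_sum]
  calc ∑ n ∈ latticeDisc N, waveSummand α t (jb2 n)
      ≤ ∑ n ∈ latticeDisc N, 2 * t * jb2 n ^ (2 * α - 2) :=
        sum_le_sum fun n _ => waveSummand_le ht (jb2_pos n)
    _ ≤ ∑ n ∈ latticeSquare N, 2 * t * jb2 n ^ (2 * α - 2) :=
        sum_le_sum_of_subset_of_nonneg (filter_subset _ _) fun n _ _ => by
          have := jb2_pos n; positivity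

noncomputable def outerBlock (N : ℕ) : Finset (ℤ × ℤ) :=
  Icc ((N / 3 : ℕ) : ℤ) (2 * (N / 3 : ℕ)) ×ˢ Icc 0 ((N / 3 : ℕ) : ℤ)

lemma card_outerBlock (N : ℕ) : (N : ℝ) ^ 2 / 9 ≤ #(outerBlock N) := by
  have hcard : #(outerBlock N) = (N / 3 + 1) ^ 2 := by
    rw [outerBlock, card_product, Int.card_Icc, Int.card_Icc, sq]
    congr 1; omega
  have hN : (N : ℝ) ≤ 3 * ((N / 3 : ℕ) + 1 : ℝ) := by
    exact_mod_cast (by omega : N ≤ 3 * (N / 3 + 1))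
  rw [hcard]
  push_cast
  nlinarith [(Nat.cast_nonneg (N / 3) : (0 : ℝ) ≤ _)]

lemma outerBlock_bounds {N : ℕ} (hN : 1 ≤ N) {n : ℤ × ℤ} (hn : n ∈ outerBlock N) :
    znorm2 n ≤ N ∧ N / 5 ≤ jb2 n ∧ jb2 n ≤ 2 * N := by
  set M := N / 3 with hM
  rw [outerBlock, mem_product, mem_Icc, mem_Icc] at hn
  have h₁ : (M : ℝ) ≤ n.1 := by exact_mod_cast hn.1.1
  have h₂ : (n.1 : ℝ) ≤ 2 * M := by exact_mod_cast hn.1.2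
  have h₃ : (0 : ℝ) ≤ n.2 := by exact_mod_cast hn.2.1
  have h₄ : (n.2 : ℝ) ≤ M := by exact_mod_cast hn.2.2
  have h₅ : 3 * (M : ℝ) ≤ N := by exact_mod_cast (by omega : 3 * M ≤ N)
  have h₆ : (N : ℝ) ≤ 3 * M + 3 := by exact_mod_cast (by omega : N ≤ 3 * M + 3)
  have h₇ : (1 : ℝ) ≤ N := by exact_mod_cast hN
  have hM₀ : (0 : ℝ) ≤ M := by positivity
  have h₈ : (M : ℝ) ^ 2 ≤ (n.1 : ℝ) ^ 2 := pow_le_pow_left₀ hM₀ h₁ 2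
  have h₉ : (N : ℝ) ^ 2 ≤ (3 * M + 3) ^ 2 := pow_le_pow_left₀ (by linarith) h₆ 2
  unfold znorm2 jb2
  refine ⟨(sqrt_le_left (by positivity)).2 ?_, le_sqrt_of_sq_le ?_,
    (sqrt_le_left (by positivity)).2 ?_⟩ <;> nlinarith [sq_nonneg ((M : ℝ) - 1)]

lemma outerBlock_subset_latticeDisc {N : ℕ} (hN : 1 ≤ N) : outerBlock N ⊆ latticeDisc N :=
  fun _ hn =>
    have h := (outerBlock_bounds hN hn).1
    mem_filter.2 ⟨mem_latticeSquare_of_znorm2_le h, h⟩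

lemma exists_le_sum_latticeDisc_waveSummand (α : ℝ) :
    ∃ c > 0, ∀ t : ℝ, 0 < t → ∀ N : ℕ, 5 ≤ t * N →
      c * t * (N : ℝ) ^ (2 * α) ≤ ∑ n ∈ latticeDisc N, waveSummand α t (jb2 n) := by
  set c := min ((1 / 5 : ℝ) ^ (2 * α - 2)) (2 ^ (2 * α - 2))
  have hc : 0 < c := lt_min (by positivity) (by positivity)
  refine ⟨c / 18, by positivity, fun t ht N htN => ?_⟩
  have hN : 1 ≤ N := Nat.one_le_iff_ne_zero.2 fun h => by simp [h] at htN; linarith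
  have hN₀ : (0 : ℝ) < N := by exact_mod_cast hN
  have hterm : ∀ n ∈ outerBlock N,
      t / 2 * (c * (N : ℝ) ^ (2 * α - 2)) ≤ waveSummand α t (jb2 n) := by
    intro n hn
    obtain ⟨-, hlow, hup⟩ := outerBlock_bounds hN hn
    calc t / 2 * (c * (N : ℝ) ^ (2 * α - 2)) ≤ t / 2 * jb2 n ^ (2 * α - 2) := by
          gcongr
          exact min_rpow_mul_rpow_le_rpow (by norm_num) hN₀ (by linarith) hup
      _ ≤ waveSummand α t (jb2 n) :=
          half_mul_le_waveSummand (jb2_pos n) (by nlinarith)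
  calc c / 18 * t * (N : ℝ) ^ (2 * α)
      = (N : ℝ) ^ 2 / 9 * (t / 2 * (c * (N : ℝ) ^ (2 * α - 2))) := by
        rw [← sq_mul_rpow_two_mul_sub_two hN₀ α]; ring
    _ ≤ #(outerBlock N) * (t / 2 * (c * (N : ℝ) ^ (2 * α - 2))) := by
        gcongr
        exact card_outerBlock N
    _ ≤ ∑ n ∈ outerBlock N, waveSummand α t (jb2 n) := by
        rw [← nsmul_eq_mul]
        exact card_nsmul_le_sum _ _ _ hterm
    _ ≤ ∑ n ∈ latticeDisc N, waveSummand α t (jb2 n) :=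
        sum_le_sum_of_subset_of_nonneg (outerBlock_subset_latticeDisc hN)
          fun n _ _ => waveSummand_nonneg ht.le (jb2_pos n)

/-- Asymptotics `σ_N(t) ∼ t N^{2α}` of the wave renormalization constant (equation (sigma1)). -/
theorem stmt9 (α : ℝ) (hα : 0 < α) :
    ∃ c > 0, ∃ C > 0, ∃ K > 0, ∀ t : ℝ, 0 < t →
      (∀ N : ℕ, 1 ≤ N →
        0 ≤ sigmaRen α N t ∧ sigmaRen α N t ≤ C * t * (N : ℝ) ^ (2 * α)) ∧
      (∀ N : ℕ, K / t ≤ (N : ℝ) →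
        c * t * (N : ℝ) ^ (2 * α) ≤ sigmaRen α N t) := by
  obtain ⟨C, hC, hupper⟩ := exists_sum_latticeSquare_jb2_rpow_le hα
  obtain ⟨c, hc, hlower⟩ := exists_le_sum_latticeDisc_waveSummand α
  refine ⟨1 / (8 * π ^ 2) * c, by positivity, 1 / (8 * π ^ 2) * (2 * C), by positivity,
    5, by norm_num, fun t ht => ⟨fun N hN => ⟨?_, ?_⟩, fun N hKN => ?_⟩⟩ <;> rw [sigmaRen_eq_sum]
  · exact mul_nonneg (by positivity) (sum_nonneg fun n _ => waveSummand_nonneg ht.le (jb2_pos n))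
  · calc 1 / (8 * π ^ 2) * ∑ n ∈ latticeDisc N, waveSummand α t (jb2 n)
        ≤ 1 / (8 * π ^ 2) * (2 * t * (C * (N : ℝ) ^ (2 * α))) := by
          gcongr
          exact (sum_latticeDisc_waveSummand_le α ht.le N).trans (by gcongr; exact hupper N hN)
      _ = 1 / (8 * π ^ 2) * (2 * C) * t * (N : ℝ) ^ (2 * α) := by ring
  · have htN : 5 ≤ t * N := by rwa [div_le_iff₀ ht, mul_comm] at hKN
    calc 1 / (8 * π ^ 2) * c * t * (N : ℝ) ^ (2 * α)
        = 1 / (8 * π ^ 2) * (c * t * (N : ℝ) ^ (2 * α)) := by ring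
      _ ≤ _ := by gcongr; exact hlower t ht N htN
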